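/- For every integer N ≥ 1, h = 1/N and every z ∈ [0,1], the coefficients C̊_β(z) reproduce the exponential e^{−x} exactly: Σ_{β=0}^N C̊_β(z) · e^{−hβ} = e^{−z}. -/

import Mathlib

/-- The optimal coefficients `C̊_β(z)` of the optimal interpolation formula in
`W₂^{(1,0)}(0,1)` with equally spaced nodes `x_β = βh`, `h = 1/N`. -/
noncomputable def optC1 (N : ℕ) (z : ℝ) (β : ℕ) : ℝ :=
  let h : ℝ := 1 / N;
  1 / (2 * (1 - Real.exp (2 * h))) *
    (Real.sign (z - h * β - h) * (Real.exp (h * β + 2 * h - z) - Real.exp (z - h * β))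
      + Real.sign (z - h * β + h) * (Real.exp (h * β - z) - Real.exp (z - h * β + 2 * h))
      + (1 + Real.exp (2 * h)) * Real.sign (z - h * β) *
          (Real.exp (z - h * β) - Real.exp (h * β - z)))

/-!
With `h = 1/N` and `t = z - hβ`, each sign factor times a difference of exponentials collapses to a
`sinh |·|`, and `C̊_β(z) = (sinh |t - h| + sinh |t + h| - 2 cosh h sinh |t|) / (2 sinh h)`.
This is the hyperbolic hat function `sinh (h - |t|)₊ / sinh h`. For `hk ≤ z ≤ h(k+1)` only the
nodes `k` and `k + 1` contribute, and with `s = z - hk` the identity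
`sinh (h - s) + sinh s · e^{-h} = sinh h · e^{-s}` turns their sum into `e^{-hk} e^{-s} = e^{-z}`.
-/

open Real

theorem Real.sign_mul_sinh (u : ℝ) : sign u * sinh u = sinh |u| := by
  rcases lt_trichotomy u 0 with hu | rfl | hu
  · rw [sign_of_neg hu, abs_of_neg hu, sinh_neg, neg_one_mul]
  · simp
  · rw [sign_of_pos hu, abs_of_pos hu, one_mul]

theorem Real.sinh_sub_add_sinh_mul_exp_neg (h s : ℝ) :
    sinh (h - s) + sinh s * exp (-h) = sinh h * exp (-s) := by
  rw [← cosh_sub_sinh, ← cosh_sub_sinh, sinh_sub]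
  ring

theorem Real.sign_mul_exp_sub_exp (c u : ℝ) :
    sign u * (exp (c - u) - exp (c + u)) = -2 * exp c * sinh |u| := by
  rw [← sign_mul_sinh, sinh_eq, sub_eq_add_neg c u, exp_add, exp_add]
  ring

theorem Real.one_sub_exp_two_mul (h : ℝ) : 1 - exp (2 * h) = -2 * exp h * sinh h := by
  rw [sinh_eq, two_mul, exp_add, exp_neg]
  field_simp
  ring

theorem Real.one_add_exp_two_mul (h : ℝ) : 1 + exp (2 * h) = 2 * exp h * cosh h := by
  rw [cosh_eq, two_mul, exp_add, exp_neg]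
  field_simp
  ring

noncomputable def sinhHat (h t : ℝ) : ℝ :=
  (sinh |t - h| + sinh |t + h| - 2 * cosh h * sinh |t|) / (2 * sinh h)

theorem sinhHat_neg (h t : ℝ) : sinhHat h (-t) = sinhHat h t := by
  rw [sinhHat, sinhHat, abs_neg, ← abs_neg (-t - h), ← abs_neg (-t + h)]
  ring_nf

theorem sinhHat_eq_zero_of_le_abs {h t : ℝ} (hh : 0 ≤ h) (ht : h ≤ |t|) :
    sinhHat h t = 0 := by
  wlog ht₀ : 0 ≤ t generalizing t
  · rw [← sinhHat_neg]
    exact this (by rwa [abs_neg]) (by linarith [neg_abs_le t, abs_nonneg t])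
  rw [abs_of_nonneg ht₀] at ht
  have key : sinh (t - h) + sinh (t + h) - 2 * cosh h * sinh t = 0 := by
    rw [sinh_sub, sinh_add]
    ring
  rw [sinhHat, abs_of_nonneg ht₀, abs_of_nonneg (by linarith : 0 ≤ t - h),
    abs_of_nonneg (by linarith : 0 ≤ t + h), key, zero_div]

theorem sinhHat_of_nonneg_of_le {h t : ℝ} (ht₀ : 0 ≤ t) (hth : t ≤ h) :
    sinhHat h t = sinh (h - t) / sinh h := by
  have key : sinh |t - h| + sinh |t + h| - 2 * cosh h * sinh |t| = 2 * sinh (h - t) := by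
    rw [abs_of_nonneg ht₀, abs_of_nonpos (by linarith : t - h ≤ 0),
      abs_of_nonneg (by linarith : 0 ≤ t + h), neg_sub, sinh_sub, sinh_add]
    ring
  rw [sinhHat, key, mul_div_mul_left _ _ two_ne_zero]

theorem sinhHat_of_neg_le_of_nonpos {h t : ℝ} (ht₀ : -h ≤ t) (hth : t ≤ 0) :
    sinhHat h t = sinh (h + t) / sinh h := by
  rw [← sinhHat_neg, sinhHat_of_nonneg_of_le (by linarith) (by linarith), sub_neg_eq_add]

theorem optC1_eq_sinhHat (N : ℕ) (z : ℝ) (β : ℕ) :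
    optC1 N z β = sinhHat (1 / N) (z - 1 / N * β) := by
  set h : ℝ := 1 / N
  have h₁ : sign (z - h * β - h) * (exp (h * β + 2 * h - z) - exp (z - h * β))
      = -2 * exp h * sinh |z - h * β - h| := by
    convert sign_mul_exp_sub_exp h (z - h * β - h) using 4 <;> ring
  have h₂ : sign (z - h * β + h) * (exp (h * β - z) - exp (z - h * β + 2 * h))
      = -2 * exp h * sinh |z - h * β + h| := by
    convert sign_mul_exp_sub_exp h (z - h * β + h) using 4 <;> ring
  have h₃ : sign (z - h * β) * (exp (z - h * β) - exp (h * β - z)) = 2 * sinh |z - h * β| := by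
    rw [← sign_mul_sinh, sinh_eq, neg_sub]
    ring
  simp only [optC1, sinhHat]
  rw [h₁, h₂, mul_assoc (1 + exp (2 * h)), h₃, one_sub_exp_two_mul, one_add_exp_two_mul]
  field_simp
  ring

theorem exists_nat_lt_le_le_add_one {N : ℕ} (hN : 1 ≤ N) {x : ℝ} (hx₀ : 0 ≤ x) (hxN : x ≤ N) :
    ∃ k : ℕ, k < N ∧ (k : ℝ) ≤ x ∧ x ≤ k + 1 := by
  rcases lt_or_eq_of_le hxN with hlt | rfl
  · refine ⟨⌊x⌋₊, ?_, Nat.floor_le hx₀, (Nat.lt_floor_add_one x).le⟩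
    exact (Nat.floor_lt hx₀).2 hlt
  · refine ⟨N - 1, by omega, ?_, ?_⟩ <;> rw [Nat.cast_sub hN] <;> simp

theorem sum_sinhHat_mul_exp_neg {h z : ℝ} (hh : 0 < h) {N k : ℕ} (hk : k < N)
    (hkz : h * k ≤ z) (hzk : z ≤ h * (k + 1)) :
    ∑ β ∈ Finset.range (N + 1), sinhHat h (z - h * β) * exp (-(h * β)) = exp (-z) := by
  have hk_mem : k ∈ Finset.range (N + 1) := Finset.mem_range.2 (by omega)
  have hk1_mem : k + 1 ∈ Finset.range (N + 1) := Finset.mem_range.2 (by omega)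
  rw [Finset.sum_eq_add_of_mem k (k + 1) hk_mem hk1_mem (by omega)]
  · set s := z - h * k with hs_def
    have hs : z - h * ↑(k + 1) = s - h := by push_cast; ring
    have hs' : -(h * ↑(k + 1)) = -(h * k) + -h := by push_cast; ring
    have hsinh : sinh h ≠ 0 := (sinh_pos_iff.2 hh).ne'
    rw [hs, hs', sinhHat_of_nonneg_of_le (by linarith) (by linarith),
      sinhHat_of_neg_le_of_nonpos (by linarith) (by linarith), add_sub_cancel, exp_add]
    calc sinh (h - s) / sinh h * exp (-(h * k)) + sinh s / sinh h * (exp (-(h * k)) * exp (-h))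
        = exp (-(h * k)) * (sinh (h - s) + sinh s * exp (-h)) / sinh h := by ring
      _ = exp (-(h * k)) * exp (-s) := by
        rw [sinh_sub_add_sinh_mul_exp_neg]; field_simp
      _ = exp (-z) := by rw [← exp_add, hs_def]; ring_nf
  · rintro c - ⟨hck, hck1⟩
    rw [sinhHat_eq_zero_of_le_abs hh.le, zero_mul]
    rcases Nat.lt_or_gt_of_ne hck with hc | hc
    · have : (c : ℝ) + 1 ≤ k := by exact_mod_cast hc
      rw [abs_of_nonneg (by nlinarith)]
      nlinarith
    · have : (k : ℝ) + 2 ≤ c := by exact_mod_cast (by omega : k + 2 ≤ c)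
      rw [abs_of_nonpos (by nlinarith)]
      nlinarith

/-- For every `N ≥ 1`, `h = 1/N` and every `z ∈ [0,1]`, the optimal coefficients reproduce
the exponential `e^{−x}` exactly: `Σ_{β=0}^N C̊_β(z)·e^{−hβ} = e^{−z}`. -/
theorem optC1_reproduces_exp_neg (N : ℕ) (hN : 1 ≤ N) (z : ℝ)
    (hz : z ∈ Set.Icc (0 : ℝ) 1) :
    ∑ β ∈ Finset.range (N + 1), optC1 N z β * Real.exp (-((1 / N : ℝ) * β))
      = Real.exp (-z) := by
  have hN' : (0 : ℝ) < N := by exact_mod_cast hN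
  obtain ⟨k, hk, hkz, hzk⟩ := exists_nat_lt_le_le_add_one hN (x := z * N)
    (by nlinarith [hz.1]) (by nlinarith [hz.2])
  simp only [optC1_eq_sinhHat]
  refine sum_sinhHat_mul_exp_neg (by positivity) hk ?_ ?_
  · rw [one_div_mul_eq_div, div_le_iff₀ hN']; linarith
  · rw [one_div_mul_eq_div, le_div_iff₀ hN']; linarith
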